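/- Let d be a metric on ℂ and define, for a curve, its d-length via suprema over partitions. Fix s > 0 and a set π ⊆ { z : s ≤ |z| ≤ 2s } with the following two properties: (i) every Euclidean-continuous path in ℂ from a point of the closed ball of radius s around 0 to a point outside the open ball of radius 3s around 0 intersects π; (ii) sup{ d(x, y) : x, y ∈ π } < L, where L := inf{ len(Q; d) : Q a Euclidean-continuous path with one endpoint on the circle of radius 2s and the other endpoint on the circle of radius 3s around 0 }. Then no d-geodesic between two points of the open ball of radius s around 0 exits the open ball of radius 3s around 0. Here a d-geodesic between u and v is a Euclidean-continuous curve from u to v whose d-length equals d(u, v). -/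

import Mathlib

/-! If the geodesic `P` leaves `B_{3s}(0)` at time `t₀`, separation gives times `t₁ ≤ t₀ ≤ t₂`
with `P t₁, P t₂ ∈ Γ`, and between `t₁` and `t₀` the curve crosses the annulus `A_{2s,3s}(0)`
along a subarc `[a, b]`. Adding `0, t₁` in front of and `t₂, 1` behind a partition of `[a, b]`
gives a partition of `[0, 1]`, so, `P` being a geodesic, the triangle inequality bounds the
length of the crossing by `d(P t₁, P t₂) ≤ diam_d Γ < L`, a contradiction. -/

open scoped ENNReal
open Set AffineMap

/-- The `d`-length of a curve `Q : [0,1] → ℂ`: the supremum over partitions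
`0 = t 0 < ⋯ < t n = 1` of the sums of `d`-distances between consecutive points. -/
noncomputable def pathLen10 (d : ℂ → ℂ → ℝ) (Q : ℝ → ℂ) : ℝ≥0∞ :=
  ⨆ (n : ℕ) (t : Fin (n + 1) → ℝ) (_ : StrictMono t) (_ : t 0 = 0)
    (_ : t (Fin.last n) = 1),
    ENNReal.ofReal (∑ i : Fin n, d (Q (t i.castSucc)) (Q (t i.succ)))

section PartitionSum

variable {α : Type*} {d : α → α → ℝ} {P : ℝ → α} {a b w σ : ℝ}

def IsPartitionSum (d : α → α → ℝ) (P : ℝ → α) (a b σ : ℝ) : Prop :=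
  ∃ (n : ℕ) (t : Fin (n + 1) → ℝ), StrictMono t ∧ t 0 = a ∧ t (Fin.last n) = b ∧
    ∑ i : Fin n, d (P (t i.castSucc)) (P (t i.succ)) = σ

theorem IsPartitionSum.cons (hσ : IsPartitionSum d P a b σ) (hwa : w < a) :
    IsPartitionSum d P w b (d (P w) (P a) + σ) := by
  obtain ⟨n, t, ht, ht0, htn, rfl⟩ := hσ
  refine ⟨n + 1, Fin.cons w t, ?_, rfl, ?_, ?_⟩
  · rw [Fin.strictMono_iff_lt_succ]
    refine Fin.cases (by simpa [ht0] using hwa) fun i => ?_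
    simpa using ht i.castSucc_lt_succ
  · rw [← Fin.succ_last, Fin.cons_succ, htn]
  · rw [Fin.sum_univ_succ]
    simp [ht0]

theorem IsPartitionSum.snoc (hσ : IsPartitionSum d P a b σ) (hbw : b < w) :
    IsPartitionSum d P a w (σ + d (P b) (P w)) := by
  obtain ⟨n, t, ht, ht0, htn, rfl⟩ := hσ
  refine ⟨n + 1, Fin.snoc t w, ?_, ?_, by simp, ?_⟩
  · rw [Fin.strictMono_iff_lt_succ]
    refine Fin.lastCases (by simpa [htn] using hbw) fun i => ?_
    simpa [Fin.succ_castSucc, -Fin.castSucc_succ] using ht i.castSucc_lt_succ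
  · rw [← Fin.castSucc_zero, Fin.snoc_castSucc, ht0]
  · rw [Fin.sum_univ_castSucc]
    simp [Fin.succ_castSucc, -Fin.castSucc_succ, htn]

theorem IsPartitionSum.cons_of_le (hd_self : ∀ x, d x x = 0)
    (hσ : IsPartitionSum d P a b σ) (hwa : w ≤ a) :
    IsPartitionSum d P w b (d (P w) (P a) + σ) := by
  rcases hwa.lt_or_eq with hwa | rfl
  · exact hσ.cons hwa
  · rwa [hd_self, zero_add]

theorem IsPartitionSum.snoc_of_le (hd_self : ∀ x, d x x = 0)
    (hσ : IsPartitionSum d P a b σ) (hbw : b ≤ w) :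
    IsPartitionSum d P a w (σ + d (P b) (P w)) := by
  rcases hbw.lt_or_eq with hbw | rfl
  · exact hσ.snoc hbw
  · rwa [hd_self, add_zero]

end PartitionSum

def subarc {α : Type*} (P : ℝ → α) (a b : ℝ) : ℝ → α :=
  P ∘ lineMap a b

theorem continuousOn_subarc {α : Type*} [TopologicalSpace α] {P : ℝ → α} {a b : ℝ}
    (hP : ContinuousOn P (Icc 0 1)) (ha : a ∈ Icc (0 : ℝ) 1) (hb : b ∈ Icc (0 : ℝ) 1) :
    ContinuousOn (subarc P a b) (Icc 0 1) :=
  hP.comp lineMap_continuous.continuousOn ((convex_Icc 0 1).mapsTo_lineMap ha hb)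

section PathLength

variable {d : ℂ → ℂ → ℝ} {P : ℝ → ℂ} {σ : ℝ}

theorem ofReal_le_pathLen10 (hσ : IsPartitionSum d P 0 1 σ) :
    ENNReal.ofReal σ ≤ pathLen10 d P := by
  obtain ⟨n, t, ht, ht0, htn, rfl⟩ := hσ
  exact le_iSup_of_le n <| le_iSup_of_le t <| le_iSup_of_le ht <| le_iSup_of_le ht0 <|
    le_iSup_of_le htn le_rfl

theorem pathLen10_subarc_le {a b c : ℝ} (hab : a < b)
    (h : ∀ σ, IsPartitionSum d P a b σ → σ ≤ c) :
    pathLen10 d (subarc P a b) ≤ ENNReal.ofReal c := by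
  refine iSup_le fun n => iSup_le fun t => iSup_le fun ht => iSup_le fun ht0 =>
    iSup_le fun htn => ENNReal.ofReal_le_ofReal (h _ ⟨n, lineMap a b ∘ t, ?_, ?_, ?_, rfl⟩)
  · exact fun i j hij => (lineMap_lt_lineMap_iff_of_lt' hab).2 (ht hij)
  · simp [ht0]
  · simp [htn]

variable (hd_nonneg : ∀ x y, 0 ≤ d x y) (hd_self : ∀ x, d x x = 0)
  (hd_tri : ∀ x y z, d x z ≤ d x y + d y z)
include hd_nonneg hd_self hd_tri

theorem IsPartitionSum.le_of_pathLen10_eq {a b : ℝ}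
    (hP : pathLen10 d P = ENNReal.ofReal (d (P 0) (P 1)))
    (ha : 0 ≤ a) (hb : b ≤ 1) (hσ : IsPartitionSum d P a b σ) : σ ≤ d (P a) (P b) := by
  have hlen := ofReal_le_pathLen10 ((hσ.cons_of_le hd_self ha).snoc_of_le hd_self hb)
  rw [hP, ENNReal.ofReal_le_ofReal_iff (hd_nonneg _ _)] at hlen
  linarith [hd_tri (P 0) (P a) (P 1), hd_tri (P a) (P b) (P 1)]

theorem pathLen10_subarc_le_of_pathLen10_eq {a a' b' b : ℝ}
    (hP : pathLen10 d P = ENNReal.ofReal (d (P 0) (P 1)))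
    (ha : 0 ≤ a) (haa' : a ≤ a') (hab' : a' < b') (hb'b : b' ≤ b) (hb : b ≤ 1) :
    pathLen10 d (subarc P a' b') ≤ ENNReal.ofReal (d (P a) (P b)) :=
  pathLen10_subarc_le hab' fun σ hσ => by
    have := ((hσ.cons_of_le hd_self haa').snoc_of_le hd_self hb'b).le_of_pathLen10_eq
      hd_nonneg hd_self hd_tri hP ha hb
    linarith [hd_nonneg (P a) (P a'), hd_nonneg (P b') (P b)]

end PathLength

theorem exists_mem_uIcc_of_separates {α : Type*} [TopologicalSpace α] {A B Γ : Set α}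
    (hsep : ∀ Q : ℝ → α, ContinuousOn Q (Icc 0 1) → Q 0 ∈ A → Q 1 ∈ B →
      ∃ t ∈ Icc (0 : ℝ) 1, Q t ∈ Γ)
    {P : ℝ → α} (hP : ContinuousOn P (Icc 0 1)) {a b : ℝ} (ha : a ∈ Icc (0 : ℝ) 1)
    (hb : b ∈ Icc (0 : ℝ) 1) (hPa : P a ∈ A) (hPb : P b ∈ B) : ∃ t ∈ uIcc a b, P t ∈ Γ := by
  obtain ⟨r, hr, hΓ⟩ := hsep _ (continuousOn_subarc hP ha hb)
    (by simpa [subarc] using hPa) (by simpa [subarc] using hPb)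
  exact ⟨lineMap a b r, segment_eq_uIcc a b ▸ lineMap_mem_segment ℝ a b hr, hΓ⟩

theorem ContinuousOn.exists_crossing {f : ℝ → ℝ} {a b y z : ℝ} (hf : ContinuousOn f (Icc a b))
    (hab : a ≤ b) (hfa : f a ≤ y) (hyz : y < z) (hfb : z ≤ f b) :
    ∃ a' b', a ≤ a' ∧ a' < b' ∧ b' ≤ b ∧ f a' = y ∧ f b' = z := by
  obtain ⟨b', hb', hfb'⟩ := intermediate_value_Icc hab hf ⟨hfa.trans hyz.le, hfb⟩
  obtain ⟨a', ha', hfa'⟩ := intermediate_value_Icc hb'.1 (hf.mono (Icc_subset_Icc_right hb'.2))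
    ⟨hfa, hfb'.symm ▸ hyz.le⟩
  refine ⟨a', b', ha'.1, ha'.2.lt_of_ne ?_, hb'.2, hfa', hfb'⟩
  rintro rfl
  exact hyz.ne (hfa'.symm.trans hfb')

theorem stmt_10_general (d : ℂ → ℂ → ℝ)
    (hd_nonneg : ∀ u v, 0 ≤ d u v) (hd_self : ∀ u, d u u = 0)
    (hd_tri : ∀ u v x, d u x ≤ d u v + d v x)
    (s : ℝ) (hs : 0 < s) (Γ : Set ℂ)
    (hΓ : Γ ⊆ {z : ℂ | s ≤ ‖z‖ ∧ ‖z‖ ≤ 2 * s})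
    (hsep : ∀ Q : ℝ → ℂ, ContinuousOn Q (Set.Icc 0 1) →
      Q 0 ∈ Metric.closedBall (0 : ℂ) s → Q 1 ∉ Metric.ball (0 : ℂ) (3 * s) →
      ∃ t ∈ Set.Icc (0 : ℝ) 1, Q t ∈ Γ)
    (hdiam : (⨆ x ∈ Γ, ⨆ y ∈ Γ, ENNReal.ofReal (d x y)) <
      ⨅ (Q : ℝ → ℂ) (_ : ContinuousOn Q (Set.Icc 0 1))
        (_ : Q 0 ∈ Metric.sphere (0 : ℂ) (2 * s))
        (_ : Q 1 ∈ Metric.sphere (0 : ℂ) (3 * s)), pathLen10 d Q) :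
    ∀ u ∈ Metric.ball (0 : ℂ) s, ∀ v ∈ Metric.ball (0 : ℂ) s,
      ∀ P : ℝ → ℂ, ContinuousOn P (Set.Icc 0 1) → P 0 = u → P 1 = v →
        pathLen10 d P = ENNReal.ofReal (d u v) →
        ∀ t ∈ Set.Icc (0 : ℝ) 1, P t ∈ Metric.ball (0 : ℂ) (3 * s) := by
  rintro _ hu _ hv P hP rfl rfl hgeo t₀ ht₀
  by_contra hout
  obtain ⟨t₁, ht₁, hΓ₁⟩ := exists_mem_uIcc_of_separates (B := (Metric.ball 0 (3 * s))ᶜ) hsep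
    hP (left_mem_Icc.2 zero_le_one) ht₀ (Metric.ball_subset_closedBall hu) hout
  obtain ⟨t₂, ht₂, hΓ₂⟩ := exists_mem_uIcc_of_separates (B := (Metric.ball 0 (3 * s))ᶜ) hsep
    hP (right_mem_Icc.2 zero_le_one) ht₀ (Metric.ball_subset_closedBall hv) hout
  rw [uIcc_of_le ht₀.1] at ht₁
  rw [uIcc_of_ge ht₀.2] at ht₂
  obtain ⟨a, b, ht₁a, hab, hbt₀, ha, hb⟩ :=
    ((continuous_norm.comp_continuousOn hP).mono (Icc_subset_Icc ht₁.1 ht₀.2)).exists_crossing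
      ht₁.2 (hΓ hΓ₁).2 (by linarith : 2 * s < 3 * s) (by simpa using hout)
  have hQ : ContinuousOn (subarc P a b) (Icc 0 1) :=
    continuousOn_subarc hP ⟨ht₁.1.trans ht₁a, by linarith [ht₀.2]⟩
      ⟨by linarith [ht₁.1], hbt₀.trans ht₀.2⟩
  refine hdiam.not_ge ?_
  calc _ ≤ pathLen10 d (subarc P a b) :=
        (iInf₂_le (subarc P a b) hQ).trans
          (iInf₂_le (by simpa [subarc] using ha) (by simpa [subarc] using hb))
    _ ≤ ENNReal.ofReal (d (P t₁) (P t₂)) :=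
        pathLen10_subarc_le_of_pathLen10_eq hd_nonneg hd_self hd_tri hgeo ht₁.1 ht₁a hab
          (hbt₀.trans ht₂.1) ht₂.2
    _ ≤ _ := le_iSup₂_of_le (P t₁) hΓ₁
        (le_iSup₂ (f := fun y _ => ENNReal.ofReal (d (P t₁) y)) (P t₂) hΓ₂)

/-- "Cheap loop traps geodesics": if `Γ ⊆ {s ≤ |z| ≤ 2s}` separates `B̄_s(0)` from the
complement of `B_{3s}(0)` and has `d`-diameter smaller than the `d`-distance across the
annulus `A_{2s,3s}(0)`, then no `d`-geodesic between two points of `B_s(0)` exits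
`B_{3s}(0)`. -/
theorem stmt_10 (d : ℂ → ℂ → ℝ)
    (hd_nonneg : ∀ u v, 0 ≤ d u v) (hd_self : ∀ u, d u u = 0)
    (hd_symm : ∀ u v, d u v = d v u) (hd_tri : ∀ u v x, d u x ≤ d u v + d v x)
    (hd_pos : ∀ u v, d u v = 0 → u = v)
    (s : ℝ) (hs : 0 < s) (Γ : Set ℂ)
    (hΓ : Γ ⊆ {z : ℂ | s ≤ ‖z‖ ∧ ‖z‖ ≤ 2 * s})
    (hsep : ∀ Q : ℝ → ℂ, ContinuousOn Q (Set.Icc 0 1) →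
      Q 0 ∈ Metric.closedBall (0 : ℂ) s → Q 1 ∉ Metric.ball (0 : ℂ) (3 * s) →
      ∃ t ∈ Set.Icc (0 : ℝ) 1, Q t ∈ Γ)
    (hdiam : (⨆ x ∈ Γ, ⨆ y ∈ Γ, ENNReal.ofReal (d x y)) <
      ⨅ (Q : ℝ → ℂ) (_ : ContinuousOn Q (Set.Icc 0 1))
        (_ : Q 0 ∈ Metric.sphere (0 : ℂ) (2 * s))
        (_ : Q 1 ∈ Metric.sphere (0 : ℂ) (3 * s)), pathLen10 d Q) :
    ∀ u ∈ Metric.ball (0 : ℂ) s, ∀ v ∈ Metric.ball (0 : ℂ) s,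
      ∀ P : ℝ → ℂ, ContinuousOn P (Set.Icc 0 1) → P 0 = u → P 1 = v →
        pathLen10 d P = ENNReal.ofReal (d u v) →
        ∀ t ∈ Set.Icc (0 : ℝ) 1, P t ∈ Metric.ball (0 : ℂ) (3 * s) :=
  stmt_10_general d hd_nonneg hd_self hd_tri s hs Γ hΓ hsep hdiam
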